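/- arXiv:1410.1215 — 3 statements merged into one kernel-verified Lean document; each statement's English description precedes it below -/
import Mathlib

section
/- If A → A' and B → B' are injective homomorphisms of unital associative algebras over a field, then the induced homomorphism of coproducts (free products) A * B → A' * B' is injective. -/
/-- `C` together with `ia`, `ib` is a coproduct (free product) of the unital associative
`k`-algebras `A` and `B` in the category of unital associative `k`-algebras. -/
def IsAlgCoproduct (k : Type) [Field k] {A B C : Type}
    [Ring A] [Algebra k A] [Ring B] [Algebra k B] [Ring C] [Algebra k C]
    (ia : A →ₐ[k] C) (ib : B →ₐ[k] C) : Prop :=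
  ∀ (D : Type) [Ring D] [Algebra k D] (f : A →ₐ[k] D) (g : B →ₐ[k] D),
    ∃! h : C →ₐ[k] D, h.comp ia = f ∧ h.comp ib = g

/-!
Choose a basis of `A` containing `1` and extend its image under `f` to a basis of `A'`, so that
`f` maps the remaining basis vectors of `A` injectively to basis vectors of `A'` other than `1`;
likewise for `g`. Let `W` be the vector space with basis the alternating words in the basis
vectors `≠ 1` of `A'` and `B'`. Splitting off an optional leading `A'`-letter identifies `W` with
`A' ⊗ W₀`, where `W₀` is spanned by the words not starting with an `A'`-letter; left
multiplication on the first factor makes `W` an `A'`-module, and similarly a `B'`-module, hence a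
`C'`-module. Pulled back along `h`, an alternating word in the basis vectors `≠ 1` of `A` and `B`,
read as a product in `C`, sends the empty word to its image word under `f`, `g`. These products
span `C` and their image words are distinct basis vectors of `W`, so `c ↦ h c • ∅` is injective.
-/

open Function
open scoped TensorProduct

theorem Module.Basis.sumExtend_apply_inl {K V ι : Type} [Field K] [AddCommGroup V] [Module K V]
    {v : ι → V} (hv : LinearIndependent K v) (i : ι) : sumExtend hv (Sum.inl i) = v i := by
  simp only [sumExtend, reindex_apply, coe_extend]
  rfl

theorem exists_basis_option_extend {K V ι : Type} [Field K] [AddCommGroup V] [Module K V]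
    {v : Option ι → V} (hv : LinearIndependent K v) :
    ∃ (I : Type) (b : Module.Basis (Option I) K V) (j : ι ↪ I),
      b none = v none ∧ ∀ i, b (some (j i)) = v (some i) := by
  classical
  refine ⟨_, (Module.Basis.sumExtend hv).reindex (Equiv.optionSubtypeNe (Sum.inl none)).symm,
    ⟨fun i => ⟨Sum.inl (some i), by simp⟩, fun i i' h => by simpa using h⟩, ?_, fun i => ?_⟩ <;>
  rw [Module.Basis.reindex_apply] <;> exact Module.Basis.sumExtend_apply_inl hv _

structure MatchedBases {k A A' : Type} [Field k] [Ring A] [Algebra k A] [Ring A'] [Algebra k A']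
    (f : A →ₐ[k] A') where
  P : Type
  I : Type
  basis : Module.Basis (Option P) k A
  basis' : Module.Basis (Option I) k A'
  index : P ↪ I
  basis_none : basis none = 1
  basis'_none : basis' none = 1
  map_basis_some (p : P) : f (basis (some p)) = basis' (some (index p))

theorem MatchedBases.nonempty {k A A' : Type} [Field k] [Ring A] [Algebra k A] [Nontrivial A]
    [Ring A'] [Algebra k A'] {f : A →ₐ[k] A'} (hf : Injective f) : Nonempty (MatchedBases f) := by
  have h1 : LinearIndependent k fun _ : Option Empty => (1 : A) :=
    linearIndependent_unique_iff.2 one_ne_zero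
  obtain ⟨P, b, -, hb, -⟩ := exists_basis_option_extend h1
  obtain ⟨I, b', j, hb'none, hb'some⟩ :=
    exists_basis_option_extend (b.linearIndependent.map' f.toLinearMap (LinearMap.ker_eq_bot.2 hf))
  exact ⟨⟨P, I, b, b', j, hb, by simpa [hb] using hb'none, fun p => (hb'some p).symm⟩⟩

namespace Module.Basis
variable {k A ι W W₀ : Type} [CommSemiring k] [Semiring A] [Algebra k A]

noncomputable def finsuppEquivTensor (b : Basis ι k A) (e : W ≃ ι × W₀) :
    (W →₀ k) ≃ₗ[k] A ⊗[k] (W₀ →₀ k) :=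
  Finsupp.basisSingleOne.equiv (b.tensorProduct Finsupp.basisSingleOne) e

theorem finsuppEquivTensor_single (b : Basis ι k A) (e : W ≃ ι × W₀) (w : W) :
    b.finsuppEquivTensor e (Finsupp.single w 1) = b (e w).1 ⊗ₜ Finsupp.single (e w).2 1 := by
  have h := (Finsupp.basisSingleOne (R := k)).equiv_apply w
    (b.tensorProduct (Finsupp.basisSingleOne (R := k) (ι := W₀))) e
  rwa [tensorProduct_apply, Finsupp.coe_basisSingleOne, Finsupp.coe_basisSingleOne] at h

noncomputable def leftMulAction (b : Basis ι k A) (e : W ≃ ι × W₀) :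
    A →ₐ[k] Module.End k (W →₀ k) :=
  ((b.finsuppEquivTensor e).symm.conjAlgEquiv k).toAlgHom.comp
    (Algebra.lsmul k k (A ⊗[k] (W₀ →₀ k)))

theorem leftMulAction_single (b : Basis ι k A) (e : W ≃ ι × W₀) {i₀ : ι} (h₀ : b i₀ = 1)
    (i : ι) {w : W} {w₀ : W₀} (hw : e w = (i₀, w₀)) :
    b.leftMulAction e (b i) (Finsupp.single w 1) = Finsupp.single (e.symm (i, w₀)) 1 := by
  change (b.finsuppEquivTensor e).symm (b i • b.finsuppEquivTensor e (Finsupp.single w 1)) = _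
  rw [LinearEquiv.symm_apply_eq, finsuppEquivTensor_single, finsuppEquivTensor_single, hw, h₀,
    TensorProduct.smul_tmul', smul_eq_mul, mul_one, Equiv.apply_symm_apply]

end Module.Basis

namespace AltWord
variable {I J : Type}

def Alternates (x y : I ⊕ J) : Prop := x.isLeft ≠ y.isLeft

def NotLedBy (s : Bool) (l : List (I ⊕ J)) : Prop := ∀ y ∈ l.head?, s ≠ y.isLeft

end AltWord

open AltWord in
abbrev AltWord (I J : Type) := {l : List (I ⊕ J) // l.IsChain Alternates}

namespace AltWord
variable {I J P Q : Type}

abbrev NotLed (I J : Type) (s : Bool) :=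
  {l : List (I ⊕ J) // l.IsChain Alternates ∧ NotLedBy s l}

def equivLeft : AltWord I J ≃ Option I × NotLed I J true where
  toFun
    | ⟨[], h⟩ => (none, ⟨[], h, by simp [NotLedBy]⟩)
    | ⟨Sum.inr j :: t, h⟩ => (none, ⟨_, h, by simp [NotLedBy]⟩)
    | ⟨Sum.inl i :: t, h⟩ => (some i, ⟨t, h.tail, (List.isChain_cons.1 h).1⟩)
  invFun
    | (some i, w) => ⟨Sum.inl i :: w.1, List.isChain_cons.2 ⟨w.2.2, w.2.1⟩⟩
    | (none, w) => ⟨w.1, w.2.1⟩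
  left_inv := by rintro ⟨_ | ⟨_ | _, _⟩, _⟩ <;> rfl
  right_inv := by
    rintro ⟨_ | _, ⟨_ | ⟨_ | _, _⟩, _, hn⟩⟩ <;> first | rfl | simp [NotLedBy] at hn

def equivRight : AltWord I J ≃ Option J × NotLed I J false where
  toFun
    | ⟨[], h⟩ => (none, ⟨[], h, by simp [NotLedBy]⟩)
    | ⟨Sum.inl i :: t, h⟩ => (none, ⟨_, h, by simp [NotLedBy]⟩)
    | ⟨Sum.inr j :: t, h⟩ => (some j, ⟨t, h.tail, (List.isChain_cons.1 h).1⟩)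
  invFun
    | (some j, w) => ⟨Sum.inr j :: w.1, List.isChain_cons.2 ⟨w.2.2, w.2.1⟩⟩
    | (none, w) => ⟨w.1, w.2.1⟩
  left_inv := by rintro ⟨_ | ⟨_ | _, _⟩, _⟩ <;> rfl
  right_inv := by
    rintro ⟨_ | _, ⟨_ | ⟨_ | _, _⟩, _, hn⟩⟩ <;> first | rfl | simp [NotLedBy] at hn

theorem equivLeft_of_notLedBy (w : AltWord I J) (hw : NotLedBy true w.1) :
    equivLeft w = (none, ⟨w.1, w.2, hw⟩) := by
  rcases w with ⟨_ | ⟨_ | _, _⟩, _⟩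
  exacts [rfl, by simp [NotLedBy] at hw, rfl]

theorem equivRight_of_notLedBy (w : AltWord I J) (hw : NotLedBy false w.1) :
    equivRight w = (none, ⟨w.1, w.2, hw⟩) := by
  rcases w with ⟨_ | ⟨_ | _, _⟩, _⟩
  exacts [rfl, rfl, by simp [NotLedBy] at hw]

def map (f : P → I) (g : Q → J) (w : AltWord P Q) : AltWord I J :=
  ⟨w.1.map (Sum.map f g),
    (List.isChain_map _).2 (w.2.imp fun x y h => by simpa [Alternates] using h)⟩

theorem map_injective {f : P → I} {g : Q → J} (hf : Injective f) (hg : Injective g) :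
    Injective (map f g) := fun _ _ h =>
  Subtype.ext (List.map_injective_iff.2 (Sum.map_injective.2 ⟨hf, hg⟩) (congrArg Subtype.val h))

theorem notLedBy_map (f : P → I) (g : Q → J) {s : Bool} {l : List (P ⊕ Q)} (hl : NotLedBy s l) :
    NotLedBy s (l.map (Sum.map f g)) := by
  rcases l with _ | ⟨_ | _, _⟩ <;> simp_all [NotLedBy]

variable {k A : Type} [CommSemiring k] [Semiring A] [Algebra k A]

theorem leftMulAction_equivLeft_single (b : Module.Basis (Option I) k A) (h1 : b none = 1)
    (i : I) (w : AltWord I J) (hw : NotLedBy true w.1) :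
    b.leftMulAction equivLeft (b (some i)) (Finsupp.single w 1)
      = Finsupp.single ⟨Sum.inl i :: w.1, List.isChain_cons.2 ⟨hw, w.2⟩⟩ 1 :=
  b.leftMulAction_single _ h1 _ (equivLeft_of_notLedBy w hw)

theorem leftMulAction_equivRight_single (b : Module.Basis (Option J) k A) (h1 : b none = 1)
    (j : J) (w : AltWord I J) (hw : NotLedBy false w.1) :
    b.leftMulAction equivRight (b (some j)) (Finsupp.single w 1)
      = Finsupp.single ⟨Sum.inr j :: w.1, List.isChain_cons.2 ⟨hw, w.2⟩⟩ 1 :=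
  b.leftMulAction_single _ h1 _ (equivRight_of_notLedBy w hw)

end AltWord

def wordProd {M I J : Type} [Monoid M] (u : I → M) (v : J → M) (l : List (I ⊕ J)) : M :=
  (l.map (Sum.elim u v)).prod

theorem wordProd_cons {M I J : Type} [Monoid M] (u : I → M) (v : J → M) (x : I ⊕ J)
    (l : List (I ⊕ J)) : wordProd u v (x :: l) = Sum.elim u v x * wordProd u v l :=
  List.prod_cons

section WordSpan
open AltWord Submodule
variable {k A B C P Q : Type} [CommSemiring k] [Semiring A] [Algebra k A] [Semiring B]
  [Algebra k B] [Semiring C] [Algebra k C] (iA : A →ₐ[k] C) (iB : B →ₐ[k] C)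
  (bA : Module.Basis (Option P) k A) (bB : Module.Basis (Option Q) k B)

abbrev wordSpan : Submodule k C :=
  span k (Set.range fun w : AltWord P Q => wordProd (iA ∘ bA ∘ some) (iB ∘ bB ∘ some) w.1)

theorem mul_wordProd_mem_wordSpan_left (h1A : bA none = 1) (a : A) (w : AltWord P Q) :
    iA a * wordProd (iA ∘ bA ∘ some) (iB ∘ bB ∘ some) w.1 ∈ wordSpan iA iB bA bB := by
  suffices h : ∀ a (w : AltWord P Q), NotLedBy true w.1 →
      iA a * wordProd (iA ∘ bA ∘ some) (iB ∘ bB ∘ some) w.1 ∈ wordSpan iA iB bA bB by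
    rcases w with ⟨_ | ⟨p | q, t⟩, hw⟩
    · exact h a _ (by simp [NotLedBy])
    · rw [wordProd_cons, Sum.elim_inl, comp_apply, comp_apply, ← mul_assoc, ← map_mul]
      exact h _ ⟨t, hw.tail⟩ (List.isChain_cons.1 hw).1
    · exact h a _ (by simp [NotLedBy])
  intro a w hw
  have hbasis : ∀ i, iA (bA i) * wordProd (iA ∘ bA ∘ some) (iB ∘ bB ∘ some) w.1
      ∈ wordSpan iA iB bA bB := by
    rintro (_ | p)
    · rw [h1A, map_one, one_mul]
      exact subset_span ⟨w, rfl⟩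
    · exact subset_span ⟨⟨Sum.inl p :: w.1, List.isChain_cons.2 ⟨hw, w.2⟩⟩, rfl⟩
  have hle : span k (Set.range bA) ≤ (wordSpan iA iB bA bB).comap
      ((LinearMap.mulRight k (wordProd (iA ∘ bA ∘ some) (iB ∘ bB ∘ some) w.1)).comp
        iA.toLinearMap) :=
    span_le.2 (Set.range_subset_iff.2 hbasis)
  exact hle (bA.span_eq ▸ mem_top : a ∈ span k (Set.range bA))

theorem mul_wordProd_mem_wordSpan_right (h1B : bB none = 1) (b : B) (w : AltWord P Q) :
    iB b * wordProd (iA ∘ bA ∘ some) (iB ∘ bB ∘ some) w.1 ∈ wordSpan iA iB bA bB := by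
  suffices h : ∀ b (w : AltWord P Q), NotLedBy false w.1 →
      iB b * wordProd (iA ∘ bA ∘ some) (iB ∘ bB ∘ some) w.1 ∈ wordSpan iA iB bA bB by
    rcases w with ⟨_ | ⟨p | q, t⟩, hw⟩
    · exact h b _ (by simp [NotLedBy])
    · exact h b _ (by simp [NotLedBy])
    · rw [wordProd_cons, Sum.elim_inr, comp_apply, comp_apply, ← mul_assoc, ← map_mul]
      exact h _ ⟨t, hw.tail⟩ (List.isChain_cons.1 hw).1
  intro b w hw
  have hbasis : ∀ i, iB (bB i) * wordProd (iA ∘ bA ∘ some) (iB ∘ bB ∘ some) w.1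
      ∈ wordSpan iA iB bA bB := by
    rintro (_ | q)
    · rw [h1B, map_one, one_mul]
      exact subset_span ⟨w, rfl⟩
    · exact subset_span ⟨⟨Sum.inr q :: w.1, List.isChain_cons.2 ⟨hw, w.2⟩⟩, rfl⟩
  have hle : span k (Set.range bB) ≤ (wordSpan iA iB bA bB).comap
      ((LinearMap.mulRight k (wordProd (iA ∘ bA ∘ some) (iB ∘ bB ∘ some) w.1)).comp
        iB.toLinearMap) :=
    span_le.2 (Set.range_subset_iff.2 hbasis)
  exact hle (bB.span_eq ▸ mem_top : b ∈ span k (Set.range bB))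

end WordSpan

namespace IsAlgCoproduct
open Submodule
variable {k A B C : Type} [Field k] [Ring A] [Algebra k A] [Ring B] [Algebra k B] [Ring C]
  [Algebra k C] {iA : A →ₐ[k] C} {iB : B →ₐ[k] C}

theorem adjoin_range_eq_top (hC : IsAlgCoproduct k iA iB) :
    Algebra.adjoin k (Set.range iA ∪ Set.range iB) = ⊤ := by
  set S := Algebra.adjoin k (Set.range iA ∪ Set.range iB)
  have hA : ∀ a, iA a ∈ S := fun a => Algebra.subset_adjoin (Or.inl ⟨a, rfl⟩)
  have hB : ∀ b, iB b ∈ S := fun b => Algebra.subset_adjoin (Or.inr ⟨b, rfl⟩)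
  obtain ⟨u, ⟨huA, huB⟩, -⟩ := hC S (iA.codRestrict S hA) (iB.codRestrict S hB)
  obtain ⟨_, -, huniq⟩ := hC C iA iB
  have hid : S.val.comp u = AlgHom.id k C :=
    (huniq _ ⟨by rw [AlgHom.comp_assoc, huA]; rfl, by rw [AlgHom.comp_assoc, huB]; rfl⟩).trans
      (huniq _ ⟨rfl, rfl⟩).symm
  refine eq_top_iff.2 fun x _ => ?_
  rw [← AlgHom.id_apply (R := k) x, ← hid]
  exact (u x).2

theorem wordSpan_eq_top {P Q : Type} (hC : IsAlgCoproduct k iA iB)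
    {bA : Module.Basis (Option P) k A} {bB : Module.Basis (Option Q) k B}
    (h1A : bA none = 1) (h1B : bB none = 1) : wordSpan iA iB bA bB = ⊤ := by
  set S := wordSpan iA iB bA bB
  have hstable : ∀ x ∈ Algebra.adjoin k (Set.range iA ∪ Set.range iB),
      S ≤ S.comap (LinearMap.mulLeft k x) := by
    intro x hx
    induction hx using Algebra.adjoin_induction with
    | mem x hx =>
      rcases hx with ⟨a, rfl⟩ | ⟨b, rfl⟩
      · exact span_le.2 (Set.range_subset_iff.2 (mul_wordProd_mem_wordSpan_left iA iB bA bB h1A a))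
      · exact span_le.2 (Set.range_subset_iff.2 (mul_wordProd_mem_wordSpan_right iA iB bA bB h1B b))
    | algebraMap r => exact fun s hs => by simpa [Algebra.smul_def] using S.smul_mem r hs
    | add x y _ _ hx hy => exact fun s hs => by simpa [add_mul] using S.add_mem (hx hs) (hy hs)
    | mul x y _ _ hx hy => exact fun s hs => by simpa [mul_assoc] using hx (hy hs)
  have h1 : (1 : C) ∈ S := subset_span ⟨⟨[], List.isChain_nil⟩, rfl⟩
  refine eq_top_iff.2 fun x _ => ?_
  simpa using hstable x (hC.adjoin_range_eq_top ▸ Algebra.mem_top) h1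

end IsAlgCoproduct

section Evaluation
open AltWord
variable {k A A' B B' C : Type} [Field k] [Ring A] [Algebra k A] [Ring A'] [Algebra k A']
  [Ring B] [Algebra k B] [Ring B'] [Algebra k B'] [Ring C] [Algebra k C]
  {iA : A →ₐ[k] C} {iB : B →ₐ[k] C} {f : A →ₐ[k] A'} {g : B →ₐ[k] B'}
  {𝔄 : MatchedBases f} {𝔅 : MatchedBases g} {σ : C →ₐ[k] Module.End k (AltWord 𝔄.I 𝔅.I →₀ k)}

theorem algHom_wordProd_single_nil
    (hσA : ∀ a, σ (iA a) = 𝔄.basis'.leftMulAction equivLeft (f a))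
    (hσB : ∀ b, σ (iB b) = 𝔅.basis'.leftMulAction equivRight (g b)) (w : AltWord 𝔄.P 𝔅.P) :
    σ (wordProd (iA ∘ 𝔄.basis ∘ some) (iB ∘ 𝔅.basis ∘ some) w.1)
        (Finsupp.single ⟨[], List.isChain_nil⟩ 1)
      = Finsupp.single (w.map 𝔄.index 𝔅.index) 1 := by
  rcases w with ⟨l, hl⟩
  induction l with
  | nil => simp [wordProd, AltWord.map]
  | cons x t ih =>
    rw [wordProd_cons, map_mul, Module.End.mul_apply, ih hl.tail]
    rcases x with p | q
    · have ht : NotLedBy true t := (List.isChain_cons.1 hl).1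
      rw [Sum.elim_inl, comp_apply, comp_apply, hσA, 𝔄.map_basis_some,
        leftMulAction_equivLeft_single _ 𝔄.basis'_none _ _ (notLedBy_map _ _ ht)]
      rfl
    · have ht : NotLedBy false t := (List.isChain_cons.1 hl).1
      rw [Sum.elim_inr, comp_apply, comp_apply, hσB, 𝔅.map_basis_some,
        leftMulAction_equivRight_single _ 𝔅.basis'_none _ _ (notLedBy_map _ _ ht)]
      rfl

theorem injective_algHom_apply_single_nil (hC : IsAlgCoproduct k iA iB)
    (hσA : ∀ a, σ (iA a) = 𝔄.basis'.leftMulAction equivLeft (f a))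
    (hσB : ∀ b, σ (iB b) = 𝔅.basis'.leftMulAction equivRight (g b)) :
    Injective fun c => σ c (Finsupp.single ⟨[], List.isChain_nil⟩ 1) := by
  set Φ := Finsupp.linearCombination k
    fun w : AltWord 𝔄.P 𝔅.P => wordProd (iA ∘ 𝔄.basis ∘ some) (iB ∘ 𝔅.basis ∘ some) w.1
  have hΦ : Surjective Φ := by
    rw [← LinearMap.range_eq_top, Finsupp.range_linearCombination]
    exact hC.wordSpan_eq_top 𝔄.basis_none 𝔅.basis_none
  set E := (LinearMap.applyₗ (Finsupp.single ⟨[], List.isChain_nil⟩ 1)).comp σ.toLinearMap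
  have hEΦ : E ∘ₗ Φ = Finsupp.lmapDomain k k (AltWord.map 𝔄.index 𝔅.index) :=
    Finsupp.lhom_ext' fun w => LinearMap.ext_ring <| by
      simp [E, Φ, algHom_wordProd_single_nil hσA hσB]
  refine Injective.of_comp_right (g := Φ) ?_ hΦ
  change Injective (E ∘ₗ Φ)
  rw [hEΦ]
  exact Finsupp.mapDomain_injective (map_injective 𝔄.index.injective 𝔅.index.injective)

end Evaluation

/-- If `A → A'` and `B → B'` are injective homomorphisms of unital
associative algebras over a field `k`, then the induced homomorphism of coproducts
(free products) `A * B → A' * B'` is injective. -/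
theorem free_product_map_injective
    (k : Type) [Field k]
    (A A' B B' C C' : Type)
    [Ring A] [Algebra k A] [Ring A'] [Algebra k A']
    [Ring B] [Algebra k B] [Ring B'] [Algebra k B']
    [Ring C] [Algebra k C] [Ring C'] [Algebra k C']
    (iA : A →ₐ[k] C) (iB : B →ₐ[k] C) (hC : IsAlgCoproduct k iA iB)
    (iA' : A' →ₐ[k] C') (iB' : B' →ₐ[k] C') (hC' : IsAlgCoproduct k iA' iB')
    (f : A →ₐ[k] A') (g : B →ₐ[k] B')
    (hf : Function.Injective f) (hg : Function.Injective g)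
    (h : C →ₐ[k] C')
    (hhA : h.comp iA = iA'.comp f) (hhB : h.comp iB = iB'.comp g) :
    Function.Injective h := by
  obtain _ | _ := subsingleton_or_nontrivial C
  · exact injective_of_subsingleton h
  have := iA.toRingHom.domain_nontrivial
  have := iB.toRingHom.domain_nontrivial
  obtain ⟨𝔄⟩ := MatchedBases.nonempty hf
  obtain ⟨𝔅⟩ := MatchedBases.nonempty hg
  obtain ⟨ρ, ⟨hρA, hρB⟩, -⟩ := hC' (Module.End k (AltWord 𝔄.I 𝔅.I →₀ k))
    (𝔄.basis'.leftMulAction AltWord.equivLeft) (𝔅.basis'.leftMulAction AltWord.equivRight)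
  exact Injective.of_comp (f := fun c' => ρ c' (Finsupp.single ⟨[], List.isChain_nil⟩ 1))
    (injective_algHom_apply_single_nil (σ := ρ.comp h) hC
      (fun a => (congrArg ρ (DFunLike.congr_fun hhA a)).trans (DFunLike.congr_fun hρA (f a)))
      (fun b => (congrArg ρ (DFunLike.congr_fun hhB b)).trans (DFunLike.congr_fun hρB (g b))))
end

section
/- Let f : C → D be a homomorphism of cosemisimple coalgebras over ℂ. Then f is injective if and only if the corestriction functor from C-comodules to D-comodules is full on finite-dimensional comodules, equivalently, if and only if non-isomorphic simple C-comodules are sent to non-isomorphic (semisimple decompositions of) D-comodules with no new morphisms. -/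
open TensorProduct

variable (C : Type) [AddCommGroup C] [Module ℂ C] [Coalgebra ℂ C]

/-- A (right) comodule structure of a coalgebra `C` on a ℂ-module `V`. -/
structure CoactsOn (V : Type) [AddCommGroup V] [Module ℂ V] where
  ρ : V →ₗ[ℂ] V ⊗[ℂ] C
  counit_law : ∀ v : V,
    TensorProduct.rid ℂ V (LinearMap.lTensor V (Coalgebra.counit (R := ℂ)) (ρ v)) = v
  coassoc : ∀ v : V,
    TensorProduct.assoc ℂ V C C (LinearMap.rTensor C ρ (ρ v)) =
      LinearMap.lTensor V (Coalgebra.comul (R := ℂ)) (ρ v)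

variable {C}

/-- `U` is a subcomodule of the `C`-comodule `(V, ρ)`. -/
def IsSubcomodule {V : Type} [AddCommGroup V] [Module ℂ V] (ρ : CoactsOn C V)
    (U : Submodule ℂ V) : Prop :=
  ∀ u ∈ U, ρ.ρ u ∈ LinearMap.range (LinearMap.rTensor C U.subtype)

/-- `φ` is a map of `C`-comodules. -/
def IsComodMap {V W : Type} [AddCommGroup V] [Module ℂ V] [AddCommGroup W] [Module ℂ W]
    (ρV : CoactsOn C V) (ρW : CoactsOn C W) (φ : V →ₗ[ℂ] W) : Prop :=
  ∀ v : V, ρW.ρ (φ v) = LinearMap.rTensor C φ (ρV.ρ v)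

/-- `C` is cosemisimple: in every finite-dimensional comodule, every subcomodule has a
subcomodule complement (equivalently, every comodule is a direct sum of simples). -/
def IsCosemisimple (C : Type) [AddCommGroup C] [Module ℂ C] [Coalgebra ℂ C] : Prop :=
  ∀ (V : Type) [AddCommGroup V] [Module ℂ V] [FiniteDimensional ℂ V]
    (ρ : CoactsOn C V) (U : Submodule ℂ V), IsSubcomodule ρ U →
      ∃ U' : Submodule ℂ V, IsSubcomodule ρ U' ∧ IsCompl U U'

/-!
The dual algebra `D*` acts on every `D`-comodule, and the submodules for this action are exactly
the subcomodules; so when `D` is cosemisimple, a finite-dimensional `D`-comodule is a semisimple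
module over the image of `D*` in its endomorphism ring. If corestriction along `f` is full, the
action of any `ξ ∈ C*` on a finite-dimensional `C`-comodule commutes with every `D`-comodule
endomorphism, and the Jacobson density theorem shows that on a given vector `ξ` acts as some
`η ∘ f` with `η ∈ D*`. For `x ∈ ker f`, working in the finite-dimensional subcomodule of `C`
generated by `x` and applying the counit gives `ξ x = η (f x) = 0` for every `ξ`, so `x = 0`.
Conversely, if `f` is injective then so is `id ⊗ f`, which reflects the comodule-map equation.
-/

open LinearMap

section Contraction

variable {K M N P : Type*} [Field K] [AddCommGroup M] [Module K M] [AddCommGroup N] [Module K N]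
  [AddCommGroup P] [Module K P]

noncomputable def contract (ξ : Module.Dual K N) : M ⊗[K] N →ₗ[K] M :=
  TensorProduct.rid K M ∘ₗ lTensor M ξ

@[simp] lemma contract_tmul (ξ : Module.Dual K N) (m : M) (n : N) :
    contract ξ (m ⊗ₜ[K] n) = ξ n • m := by
  simp [contract]

lemma contract_rTensor (ξ : Module.Dual K N) (φ : M →ₗ[K] P) (z : M ⊗[K] N) :
    contract ξ (rTensor N φ z) = φ (contract ξ z) := by
  induction z using TensorProduct.induction_on with
  | zero => simp
  | tmul m n => simp
  | add a b ha hb => simp [ha, hb]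

lemma contract_lTensor (ξ : Module.Dual K P) (g : N →ₗ[K] P) (z : M ⊗[K] N) :
    contract ξ (lTensor M g z) = contract (ξ ∘ₗ g) z := by
  induction z using TensorProduct.induction_on with
  | zero => simp
  | tmul m n => simp
  | add a b ha hb => simp [ha, hb]

lemma eq_zero_of_forall_contract_eq_zero {z : M ⊗[K] N}
    (h : ∀ ξ : Module.Dual K N, contract ξ z = 0) : z = 0 := by
  classical
  let b := Module.Basis.ofVectorSpace K N
  have hcoord : ∀ (z : M ⊗[K] N) i,
      TensorProduct.equivFinsuppOfBasisRight b z i = contract (b.coord i) z := by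
    intro z i
    induction z using TensorProduct.induction_on with
    | zero => simp
    | tmul m n => simp
    | add a c ha hc => simp [ha, hc]
  apply (TensorProduct.equivFinsuppOfBasisRight b).injective
  ext i
  simp [hcoord, h]

lemma ext_contract {z₁ z₂ : M ⊗[K] N}
    (h : ∀ ξ : Module.Dual K N, contract ξ z₁ = contract ξ z₂) : z₁ = z₂ :=
  sub_eq_zero.mp (eq_zero_of_forall_contract_eq_zero fun ξ => by simp [h ξ])

lemma mem_range_rTensor_subtype_iff (U : Submodule K M) (z : M ⊗[K] N) :
    z ∈ range (rTensor N U.subtype) ↔ ∀ ξ : Module.Dual K N, contract ξ z ∈ U := by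
  rw [← (rTensor_exact N (LinearMap.exact_subtype_mkQ U) U.mkQ_surjective).linearMap_ker_eq,
    mem_ker]
  simp_rw [← Submodule.Quotient.mk_eq_zero, ← Submodule.mkQ_apply, ← contract_rTensor]
  exact ⟨fun hz ξ => by rw [hz, map_zero], eq_zero_of_forall_contract_eq_zero⟩

lemma rTensor_subtype_injective (U : Submodule K M) : Function.Injective (rTensor N U.subtype) :=
  Module.Flat.rTensor_preserves_injective_linearMap _ U.injective_subtype

lemma contract_assoc (ξ : Module.Dual K N) (η : Module.Dual K P) (t : (M ⊗[K] N) ⊗[K] P) :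
    contract (mul' K K ∘ₗ TensorProduct.map ξ η) (TensorProduct.assoc K M N P t) =
      contract η (rTensor P (contract ξ) t) := by
  have : contract (mul' K K ∘ₗ TensorProduct.map ξ η) ∘ₗ
      (TensorProduct.assoc K M N P).toLinearMap = contract η ∘ₗ rTensor P (contract ξ) :=
    TensorProduct.ext_threefold fun m n p => by simp [smul_smul, mul_comm]
  exact LinearMap.congr_fun this t

end Contraction

namespace CoactsOn

variable {V W : Type} [AddCommGroup V] [Module ℂ V] [AddCommGroup W] [Module ℂ W]
  {D : Type} [AddCommGroup D] [Module ℂ D] [Coalgebra ℂ D]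

noncomputable def act (ρ : CoactsOn C V) : Module.Dual ℂ C →ₗ[ℂ] Module.End ℂ V where
  toFun ξ := contract ξ ∘ₗ ρ.ρ
  map_add' ξ η := by ext; simp [contract, lTensor_add]
  map_smul' c ξ := by ext; simp [contract, lTensor_smul]

lemma act_apply (ρ : CoactsOn C V) (ξ : Module.Dual ℂ C) (v : V) :
    ρ.act ξ v = contract ξ (ρ.ρ v) := rfl

lemma act_counit (ρ : CoactsOn C V) : ρ.act Coalgebra.counit = 1 :=
  LinearMap.ext ρ.counit_law

lemma act_convMul (ρ : CoactsOn C V) (ξ η : Module.Dual ℂ C) :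
    ρ.act (WithConv.toConv ξ * WithConv.toConv η).ofConv = ρ.act ξ * ρ.act η := by
  ext v
  calc contract (LinearMap.mul' ℂ ℂ ∘ₗ TensorProduct.map ξ η ∘ₗ Coalgebra.comul) (ρ.ρ v)
      = contract (LinearMap.mul' ℂ ℂ ∘ₗ TensorProduct.map ξ η)
          (TensorProduct.assoc ℂ V C C (rTensor C ρ.ρ (ρ.ρ v))) := by
        rw [ρ.coassoc, contract_lTensor, LinearMap.comp_assoc]
    _ = contract η (rTensor C (ρ.act ξ) (ρ.ρ v)) := by
        rw [contract_assoc, ← LinearMap.comp_apply (rTensor C _), ← rTensor_comp]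
        rfl
    _ = ρ.act ξ (ρ.act η v) := contract_rTensor _ _ _

lemma isComodMap_iff (ρV : CoactsOn C V) (ρW : CoactsOn C W) (φ : V →ₗ[ℂ] W) :
    IsComodMap ρV ρW φ ↔ ∀ ξ, φ ∘ₗ ρV.act ξ = ρW.act ξ ∘ₗ φ := by
  refine ⟨fun h ξ => LinearMap.ext fun v => ?_, fun h v => ext_contract fun ξ => ?_⟩
  · simp [act_apply, h v, contract_rTensor]
  · simpa [act_apply, contract_rTensor] using (LinearMap.congr_fun (h ξ) v).symm

lemma isSubcomodule_iff (ρ : CoactsOn C V) (U : Submodule ℂ V) :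
    IsSubcomodule ρ U ↔ ∀ ξ, ∀ u ∈ U, ρ.act ξ u ∈ U := by
  simp only [IsSubcomodule, mem_range_rTensor_subtype_iff, act_apply]
  exact forall_comm.trans (forall_congr' fun _ => forall_comm) |>.symm

noncomputable def corestrict (ρ : CoactsOn C V) (f : C →ₗc[ℂ] D) : CoactsOn D V where
  ρ := lTensor V f.toLinearMap ∘ₗ ρ.ρ
  counit_law v := by
    change contract _ (lTensor V _ (ρ.ρ v)) = v
    rw [contract_lTensor, f.counit_comp]
    exact ρ.counit_law v
  coassoc v := by
    have hnat : rTensor D (lTensor V f.toLinearMap ∘ₗ ρ.ρ) ∘ₗ lTensor V f.toLinearMap =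
        TensorProduct.map (lTensor V f.toLinearMap) f.toLinearMap ∘ₗ rTensor C ρ.ρ := by
      rw [rTensor_comp, comp_assoc, rTensor_comp_lTensor, ← lTensor_comp_rTensor, ← comp_assoc,
        rTensor_comp_lTensor]
    calc _ = TensorProduct.assoc ℂ V D D
          (TensorProduct.map (lTensor V f.toLinearMap) f.toLinearMap (rTensor C ρ.ρ (ρ.ρ v))) := by
          rw [← comp_apply (TensorProduct.map _ _), ← hnat]
          rfl
      _ = lTensor V (TensorProduct.map f.toLinearMap f.toLinearMap)
          (TensorProduct.assoc ℂ V C C (rTensor C ρ.ρ (ρ.ρ v))) :=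
          (LinearMap.congr_fun (map_map_comp_assoc_eq _ _ _) _).symm
      _ = lTensor V (TensorProduct.map f.toLinearMap f.toLinearMap ∘ₗ Coalgebra.comul)
          (ρ.ρ v) := by
          rw [ρ.coassoc, lTensor_comp, comp_apply]
      _ = _ := by rw [f.map_comp_comul, lTensor_comp, comp_apply]; rfl

lemma act_corestrict (ρ : CoactsOn C V) (f : C →ₗc[ℂ] D) (η : Module.Dual ℂ D) :
    (ρ.corestrict f).act η = ρ.act (η ∘ₗ f.toLinearMap) :=
  LinearMap.ext fun _ => contract_lTensor _ _ _

lemma isComodMap_of_isComodMap_corestrict {f : C →ₗc[ℂ] D} (hf : Function.Injective f)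
    {ρV : CoactsOn C V} {ρW : CoactsOn C W} {φ : V →ₗ[ℂ] W}
    (hφ : IsComodMap (ρV.corestrict f) (ρW.corestrict f) φ) : IsComodMap ρV ρW φ := fun v => by
  apply Module.Flat.lTensor_preserves_injective_linearMap f.toLinearMap hf
  refine (hφ v).trans ?_
  change rTensor D φ (lTensor V f.toLinearMap (ρV.ρ v)) = _
  rw [← comp_apply (rTensor D φ), rTensor_comp_lTensor, ← lTensor_comp_rTensor]
  rfl

noncomputable def regular : CoactsOn C C where
  ρ := Coalgebra.comul
  counit_law c := by simp [Coalgebra.lTensor_counit_comul]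
  coassoc c := Coalgebra.coassoc_apply c

lemma counit_act_regular (ξ : Module.Dual ℂ C) (c : C) :
    Coalgebra.counit (R := ℂ) (regular.act ξ c) = ξ c := by
  rw [act_apply, ← contract_rTensor, regular, Coalgebra.rTensor_counit_comul]
  simp

section Restrict

variable (ρ : CoactsOn C V) {U : Submodule ℂ V} (hU : IsSubcomodule ρ U)

noncomputable def restrictCoaction : U →ₗ[ℂ] U ⊗[ℂ] C :=
  (LinearEquiv.ofInjective _ (rTensor_subtype_injective U)).symm.toLinearMap ∘ₗ
    (ρ.ρ ∘ₗ U.subtype).codRestrict _ fun u => hU u u.2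

lemma rTensor_subtype_restrictCoaction (u : U) :
    rTensor C U.subtype (ρ.restrictCoaction hU u) = ρ.ρ u :=
  LinearEquiv.ofInjective_symm_apply (h := rTensor_subtype_injective U) _ _

noncomputable def restrict : CoactsOn C U where
  ρ := ρ.restrictCoaction hU
  counit_law u := U.injective_subtype <| by
    change U.subtype (contract _ _) = _
    rw [← contract_rTensor, rTensor_subtype_restrictCoaction]
    exact ρ.counit_law u
  coassoc u := rTensor_subtype_injective (N := C ⊗[ℂ] C) U <| by
    have hσ : rTensor C U.subtype ∘ₗ ρ.restrictCoaction hU = ρ.ρ ∘ₗ U.subtype :=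
      LinearMap.ext (ρ.rTensor_subtype_restrictCoaction hU)
    rw [← comp_apply (rTensor _ _) (lTensor _ _), rTensor_comp_lTensor, ← lTensor_comp_rTensor,
      comp_apply, rTensor_subtype_restrictCoaction, ← ρ.coassoc, rTensor_tensor]
    simp only [LinearEquiv.coe_coe, comp_apply, LinearEquiv.symm_apply_apply]
    rw [← comp_apply (rTensor C _), ← rTensor_comp, hσ, rTensor_comp, comp_apply,
      rTensor_subtype_restrictCoaction]

lemma isComodMap_restrict_subtype : IsComodMap (ρ.restrict hU) ρ U.subtype :=
  fun u => (ρ.rTensor_subtype_restrictCoaction hU u).symm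

lemma coe_act_restrict (ξ : Module.Dual ℂ C) (u : U) :
    ((ρ.restrict hU).act ξ u : V) = ρ.act ξ u :=
  LinearMap.congr_fun ((isComodMap_iff _ _ _).1 (ρ.isComodMap_restrict_subtype hU) ξ) u

end Restrict

section Cyclic

variable (ρ : CoactsOn C V) (v : V)

lemma self_mem_range_act_flip : v ∈ range (ρ.act.flip v) :=
  ⟨Coalgebra.counit, by simp [act_counit]⟩

lemma isSubcomodule_range_act_flip : IsSubcomodule ρ (range (ρ.act.flip v)) := by
  rw [isSubcomodule_iff]
  rintro ξ _ ⟨η, rfl⟩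
  exact ⟨(WithConv.toConv ξ * WithConv.toConv η).ofConv, by simp [act_convMul]⟩

instance finiteDimensional_range_act_flip : FiniteDimensional ℂ (range (ρ.act.flip v)) := by
  obtain ⟨M, hM, hρv⟩ := TensorProduct.exists_finite_submodule_left_of_setFinite {ρ.ρ v}
    (Set.finite_singleton _)
  have hle : range (ρ.act.flip v) ≤ M := by
    rintro _ ⟨ξ, rfl⟩
    exact (mem_range_rTensor_subtype_iff M _).1 (hρv rfl) ξ
  exact Submodule.finiteDimensional_of_le hle

end Cyclic

noncomputable def actionAlgebra (ρ : CoactsOn C V) : Subalgebra ℂ (Module.End ℂ V) :=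
  (range ρ.act).toSubalgebra ⟨Coalgebra.counit, ρ.act_counit⟩ <| by
    rintro _ _ ⟨ξ, rfl⟩ ⟨η, rfl⟩
    exact ⟨_, ρ.act_convMul ξ η⟩

lemma act_mem_actionAlgebra (ρ : CoactsOn C V) (ξ : Module.Dual ℂ C) :
    ρ.act ξ ∈ ρ.actionAlgebra :=
  ⟨ξ, rfl⟩

lemma isSemisimpleModule_actionAlgebra (hC : IsCosemisimple C) [FiniteDimensional ℂ V]
    (ρ : CoactsOn C V) : IsSemisimpleModule ρ.actionAlgebra V where
  exists_isCompl p := by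
    have hp : IsSubcomodule ρ (p.restrictScalars ℂ) :=
      (isSubcomodule_iff ρ _).2 fun ξ u hu => p.smul_mem ⟨_, ρ.act_mem_actionAlgebra ξ⟩ hu
    obtain ⟨U, hU, hcompl⟩ := hC V ρ _ hp
    let q : Submodule ρ.actionAlgebra V :=
      { U with
        smul_mem' := by
          rintro ⟨_, ξ, rfl⟩ u hu
          exact (isSubcomodule_iff ρ U).1 hU ξ u hu }
    exact ⟨q, (Submodule.isCompl_restrictScalars_iff ℂ).1 hcompl⟩

lemma exists_act_comp_apply_eq_of_full [FiniteDimensional ℂ V] (hD : IsCosemisimple D)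
    (f : C →ₗc[ℂ] D) (ρ : CoactsOn C V)
    (hfull : ∀ φ : V →ₗ[ℂ] V, IsComodMap (ρ.corestrict f) (ρ.corestrict f) φ → IsComodMap ρ ρ φ)
    (ξ : Module.Dual ℂ C) (v : V) :
    ∃ η : Module.Dual ℂ D, ρ.act (η ∘ₗ f.toLinearMap) v = ρ.act ξ v := by
  let B := (ρ.corestrict f).actionAlgebra
  have := (ρ.corestrict f).isSemisimpleModule_actionAlgebra hD
  have hcomm : ∀ (g : Module.End B V) (w : V), ρ.act ξ (g w) = g (ρ.act ξ w) := by
    intro g w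
    -- a `B`-linear map is a `D`-comodule map, hence by fullness a `C`-comodule map
    have hg : IsComodMap (ρ.corestrict f) (ρ.corestrict f) (g.restrictScalars ℂ) :=
      (isComodMap_iff _ _ _).2 fun η => LinearMap.ext fun u =>
        g.map_smul ⟨_, act_mem_actionAlgebra _ η⟩ u
    exact (LinearMap.congr_fun ((isComodMap_iff _ _ _).1 (hfull _ hg) ξ) w).symm
  let a : Module.End (Module.End B V) V :=
    { toFun := ρ.act ξ
      map_add' := map_add _
      map_smul' := hcomm }
  obtain ⟨⟨_, η, rfl⟩, hη⟩ := jacobson_density a {v}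
  exact ⟨η, by rw [← act_corestrict]; exact (hη v (Finset.mem_singleton_self v)).symm⟩

end CoactsOn

theorem cosemisimple_coalgebra_map_injective_iff_corestriction_full_general
    (D : Type) [AddCommGroup D] [Module ℂ D] [Coalgebra ℂ D]
    (hD : IsCosemisimple D)
    (f : C →ₗc[ℂ] D) :
    Function.Injective f ↔
      ∀ (V W : Type) [AddCommGroup V] [Module ℂ V] [FiniteDimensional ℂ V]
        [AddCommGroup W] [Module ℂ W] [FiniteDimensional ℂ W]
        (ρV : CoactsOn C V) (ρW : CoactsOn C W) (φ : V →ₗ[ℂ] W),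
        -- `φ` is a map between the corestricted `D`-comodules …
        (∀ v : V, LinearMap.lTensor W f.toLinearMap (ρW.ρ (φ v)) =
          LinearMap.rTensor D φ (LinearMap.lTensor V f.toLinearMap (ρV.ρ v))) →
        -- … implies `φ` is a map of `C`-comodules.
        IsComodMap ρV ρW φ := by
  refine ⟨fun hf V W _ _ _ _ _ _ ρV ρW φ hφ =>
    CoactsOn.isComodMap_of_isComodMap_corestrict hf hφ,
    fun hfull => (injective_iff_map_eq_zero f).2 fun x hx => ?_⟩
  rw [← Module.forall_dual_apply_eq_zero_iff ℂ]
  intro ξ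
  let ρx := CoactsOn.regular.restrict (CoactsOn.regular.isSubcomodule_range_act_flip x)
  obtain ⟨η, hη⟩ := ρx.exists_act_comp_apply_eq_of_full hD f
    (fun φ => hfull _ _ ρx ρx φ) ξ ⟨x, CoactsOn.regular.self_mem_range_act_flip x⟩
  have h := congrArg (fun u => Coalgebra.counit (R := ℂ) (Subtype.val u)) hη
  simp only [ρx, CoactsOn.coe_act_restrict, CoactsOn.counit_act_regular, comp_apply] at h
  rw [← h]
  exact (congrArg η hx).trans (map_zero η)

/-- a homomorphism `f : C → D` of cosemisimple coalgebras over ℂ is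
injective if and only if the corestriction functor from `C`-comodules to `D`-comodules is
full on finite-dimensional comodules. -/
theorem cosemisimple_coalgebra_map_injective_iff_corestriction_full
    (D : Type) [AddCommGroup D] [Module ℂ D] [Coalgebra ℂ D]
    (hC : IsCosemisimple C) (hD : IsCosemisimple D)
    (f : C →ₗc[ℂ] D) :
    Function.Injective f ↔
      ∀ (V W : Type) [AddCommGroup V] [Module ℂ V] [FiniteDimensional ℂ V]
        [AddCommGroup W] [Module ℂ W] [FiniteDimensional ℂ W]
        (ρV : CoactsOn C V) (ρW : CoactsOn C W) (φ : V →ₗ[ℂ] W),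
        -- `φ` is a map between the corestricted `D`-comodules …
        (∀ v : V, LinearMap.lTensor W f.toLinearMap (ρW.ρ (φ v)) =
          LinearMap.rTensor D φ (LinearMap.lTensor V f.toLinearMap (ρV.ρ v))) →
        -- … implies `φ` is a map of `C`-comodules.
        IsComodMap ρV ρW φ :=
  cosemisimple_coalgebra_map_injective_iff_corestriction_full_general D hD f
end

section
/- Let H be a *-algebra, P ⊆ H a *-subalgebra, and E : H → P a linear projection onto P that is a P-bimodule map satisfying E(h*) = E(h)* and E(h*h) positive for all h (a conditional expectation). For any finite-dimensional Hilbert space M with a *-representation of P, the formula ⟨h ⊗ m, k ⊗ n⟩ := ⟨m, E(h* k)·n⟩ defines a well-defined sesquilinear form on H ⊗_P M satisfying ⟨v, h·w⟩ = ⟨h*·v, w⟩ for all h ∈ H and v, w ∈ H ⊗_P M. -/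
set_option maxRecDepth 4000
open TensorProduct

noncomputable section CEAux

variable {H : Type} [Ring H] [Algebra ℂ H] [StarRing H] [StarModule ℂ H]
variable {P : StarSubalgebra ℂ H}
variable {M : Type} [NormedAddCommGroup M] [InnerProductSpace ℂ M] [FiniteDimensional ℂ M]
variable (E : H →ₗ[ℂ] H) (hE_mem : ∀ h : H, E h ∈ P)
variable (ρ : ↥P →⋆ₐ[ℂ] (M →ₗ[ℂ] M))

def ceEρ : H →ₗ[ℂ] (M →ₗ[ℂ] M) where
  toFun k := ρ ⟨E k, hE_mem k⟩
  map_add' x y := by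
    rw [show (⟨E (x + y), hE_mem _⟩ : P) = ⟨E x, hE_mem _⟩ + ⟨E y, hE_mem _⟩ from
      Subtype.ext (by simp), map_add]
  map_smul' c x := by
    rw [show (⟨E (c • x), hE_mem _⟩ : P) = c • (⟨E x, hE_mem _⟩ : P) from
      Subtype.ext (by simp), map_smul]
    rfl

def cePhi (h : H) (m : M) : (H ⊗[ℂ] M) →ₗ[ℂ] ℂ :=
  TensorProduct.lift (LinearMap.mk₂ ℂ
    (fun k n => inner (𝕜 := ℂ) m (ceEρ E hE_mem ρ (star h * k) n))
    (fun k₁ k₂ n => by simp [mul_add, inner_add_right])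
    (fun c k n => by simp [mul_smul_comm, inner_smul_right])
    (fun k n₁ n₂ => by simp [inner_add_right])
    (fun c k n => by simp [inner_smul_right]))

@[simp] lemma cePhi_tmul (h : H) (m : M) (k : H) (n : M) :
    cePhi E hE_mem ρ h m (k ⊗ₜ[ℂ] n) = inner (𝕜 := ℂ) m (ceEρ E hE_mem ρ (star h * k) n) := rfl

lemma cePhi_add_left (h₁ h₂ : H) (m : M) :
    cePhi E hE_mem ρ (h₁ + h₂) m = cePhi E hE_mem ρ h₁ m + cePhi E hE_mem ρ h₂ m :=
  TensorProduct.ext' fun k n => by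
    simp only [cePhi_tmul, LinearMap.add_apply, star_add, add_mul, map_add, inner_add_right]

lemma cePhi_smul_left (c : ℂ) (h : H) (m : M) :
    cePhi E hE_mem ρ (c • h) m = (starRingEnd ℂ c) • cePhi E hE_mem ρ h m :=
  TensorProduct.ext' fun k n => by
    simp only [cePhi_tmul, LinearMap.smul_apply, star_smul, smul_mul_assoc, map_smul,
      inner_smul_right, smul_eq_mul, starRingEnd_apply]

lemma cePhi_add_right (h : H) (m₁ m₂ : M) :
    cePhi E hE_mem ρ h (m₁ + m₂) = cePhi E hE_mem ρ h m₁ + cePhi E hE_mem ρ h m₂ :=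
  TensorProduct.ext' fun k n => by
    simp only [cePhi_tmul, LinearMap.add_apply, inner_add_left]

lemma cePhi_smul_right (c : ℂ) (h : H) (m : M) :
    cePhi E hE_mem ρ h (c • m) = (starRingEnd ℂ c) • cePhi E hE_mem ρ h m :=
  TensorProduct.ext' fun k n => by
    simp only [cePhi_tmul, LinearMap.smul_apply, inner_smul_left, smul_eq_mul]

def ceConj : ℂ →ₛₗ[starRingEnd ℂ] ℂ where
  toFun := starRingEnd ℂ
  map_add' := map_add _
  map_smul' c x := by simp [smul_eq_mul, map_mul]

@[simp] lemma ceConj_apply (x : ℂ) : ceConj x = starRingEnd ℂ x := rfl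

def ceG : H →ₗ[ℂ] M →ₗ[ℂ] ((H ⊗[ℂ] M) →ₛₗ[starRingEnd ℂ] ℂ) :=
  LinearMap.mk₂ ℂ (fun h m => ceConj.comp (cePhi E hE_mem ρ h m))
    (fun h₁ h₂ m => LinearMap.ext fun w => by
      simp only [LinearMap.comp_apply, cePhi_add_left, LinearMap.add_apply, map_add])
    (fun c h m => LinearMap.ext fun w => by
      simp only [LinearMap.comp_apply, cePhi_smul_left, LinearMap.smul_apply, ceConj_apply,
        smul_eq_mul, map_mul, Complex.conj_conj])
    (fun h m₁ m₂ => LinearMap.ext fun w => by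
      simp only [LinearMap.comp_apply, cePhi_add_right, LinearMap.add_apply, map_add])
    (fun c h m => LinearMap.ext fun w => by
      simp only [LinearMap.comp_apply, cePhi_smul_right, LinearMap.smul_apply, ceConj_apply,
        smul_eq_mul, map_mul, Complex.conj_conj])

def ceBlift : (H ⊗[ℂ] M) →ₗ[ℂ] ((H ⊗[ℂ] M) →ₛₗ[starRingEnd ℂ] ℂ) :=
  TensorProduct.lift (ceG E hE_mem ρ)

def ceB : (H ⊗[ℂ] M) →ₛₗ[starRingEnd ℂ] ((H ⊗[ℂ] M) →ₗ[ℂ] ℂ) where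
  toFun v := ceConj.comp (ceBlift E hE_mem ρ v)
  map_add' v₁ v₂ := LinearMap.ext fun w => by
    simp only [LinearMap.comp_apply, map_add, LinearMap.add_apply]
  map_smul' c v := LinearMap.ext fun w => by
    simp only [LinearMap.comp_apply, map_smul, LinearMap.smul_apply, smul_eq_mul,
      ceConj_apply, map_mul, RingHom.id_apply]

@[simp] lemma ceB_tmul (h : H) (m : M) (k : H) (n : M) :
    ceB E hE_mem ρ (h ⊗ₜ[ℂ] m) (k ⊗ₜ[ℂ] n)
      = inner (𝕜 := ℂ) m (ceEρ E hE_mem ρ (star h * k) n) := by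
  show ceConj ((ceBlift E hE_mem ρ (h ⊗ₜ[ℂ] m)) (k ⊗ₜ[ℂ] n)) = _
  rw [ceBlift, TensorProduct.lift.tmul]
  rw [ceG, LinearMap.mk₂_apply, LinearMap.comp_apply, cePhi_tmul, ceConj_apply, ceConj_apply,
    Complex.conj_conj]

end CEAux

/-- given a *-algebra `H`, a *-subalgebra `P`, a conditional expectation
`E : H → P` (a `P`-bimodule projection commuting with `*` and with `E(h*h)` positive),
and a finite-dimensional Hilbert space `M` with a *-representation of `P`, the formula
`⟨h ⊗ m, k ⊗ n⟩ = ⟨m, E(h* k)·n⟩` yields a well-defined sesquilinear form on `H ⊗_P M`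
(realized as the quotient of `H ⊗ M` by the balancing relations) which moreover satisfies
`⟨v, h·w⟩ = ⟨h*·v, w⟩`. -/
theorem conditional_expectation_pre_inner_product
    (H : Type) [Ring H] [Algebra ℂ H] [StarRing H] [StarModule ℂ H]
    (P : StarSubalgebra ℂ H)
    (E : H →ₗ[ℂ] H)
    (hE_mem : ∀ h : H, E h ∈ P)
    (hE_id : ∀ p ∈ P, E p = p)
    (hE_bimod : ∀ p ∈ P, ∀ h : H, E (p * h) = p * E h ∧ E (h * p) = E h * p)
    (hE_star : ∀ h : H, E (star h) = star (E h))
    (M : Type) [NormedAddCommGroup M] [InnerProductSpace ℂ M] [FiniteDimensional ℂ M]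
    (ρ : ↥P →⋆ₐ[ℂ] (M →ₗ[ℂ] M))
    (hpos : ∀ (h : H) (m : M),
      0 ≤ (inner (𝕜 := ℂ) m (ρ ⟨E (star h * h), hE_mem _⟩ m)).re) :
    -- the balanced tensor product `H ⊗_P M`:
    ∀ rel : Submodule ℂ (H ⊗[ℂ] M),
      rel = Submodule.span ℂ { x : H ⊗[ℂ] M |
        ∃ (h : H) (p : ↥P) (m : M), x = (h * (p : H)) ⊗ₜ[ℂ] m - h ⊗ₜ[ℂ] (ρ p m) } →
      ∃ (act : H →ₗ[ℂ] ((H ⊗[ℂ] M) ⧸ rel) →ₗ[ℂ] ((H ⊗[ℂ] M) ⧸ rel))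
        (B : ((H ⊗[ℂ] M) ⧸ rel) →ₛₗ[starRingEnd ℂ] ((H ⊗[ℂ] M) ⧸ rel) →ₗ[ℂ] ℂ),
        (∀ (h k : H) (m : M), act h (rel.mkQ (k ⊗ₜ[ℂ] m)) = rel.mkQ ((h * k) ⊗ₜ[ℂ] m)) ∧
        (∀ (h k : H) (m n : M),
          B (rel.mkQ (h ⊗ₜ[ℂ] m)) (rel.mkQ (k ⊗ₜ[ℂ] n)) =
            inner (𝕜 := ℂ) m (ρ ⟨E (star h * k), hE_mem _⟩ n)) ∧
        (∀ (h : H) (v w : (H ⊗[ℂ] M) ⧸ rel), B v (act h w) = B (act (star h) v) w) := by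
  intro rel hrel
  -- the action of `H`
  have hact_le : ∀ h : H,
      rel ≤ rel.comap (LinearMap.rTensor M (LinearMap.mulLeft ℂ h)) := by
    intro h
    refine le_trans hrel.le (Submodule.span_le.2 ?_)
    rintro x ⟨k, p, m, rfl⟩
    simp only [SetLike.mem_coe, Submodule.mem_comap, map_sub, LinearMap.rTensor_tmul,
      LinearMap.mulLeft_apply]
    rw [hrel]
    exact Submodule.subset_span ⟨h * k, p, m, by rw [mul_assoc]⟩
  set act : H →ₗ[ℂ] ((H ⊗[ℂ] M) ⧸ rel) →ₗ[ℂ] ((H ⊗[ℂ] M) ⧸ rel) :=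
    { toFun := fun h =>
        Submodule.mapQ rel rel (LinearMap.rTensor M (LinearMap.mulLeft ℂ h)) (hact_le h)
      map_add' := by
        intro h₁ h₂
        refine Submodule.linearMap_qext _ (TensorProduct.ext' fun k n => ?_)
        simp only [LinearMap.comp_apply, Submodule.mkQ_apply, Submodule.mapQ_apply,
          LinearMap.rTensor_tmul, LinearMap.mulLeft_apply, LinearMap.add_apply, add_mul,
          TensorProduct.add_tmul, map_add, Submodule.Quotient.mk_add]
      map_smul' := by
        intro c h
        refine Submodule.linearMap_qext _ (TensorProduct.ext' fun k n => ?_)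
        simp only [LinearMap.comp_apply, Submodule.mkQ_apply, Submodule.mapQ_apply,
          LinearMap.rTensor_tmul, LinearMap.mulLeft_apply, RingHom.id_apply,
          LinearMap.smul_apply, smul_mul_assoc]
        rw [← Submodule.mkQ_apply, ← Submodule.mkQ_apply, ← TensorProduct.smul_tmul',
          map_smul] }
  have hact_eq : ∀ (h k : H) (m : M),
      act h (rel.mkQ (k ⊗ₜ[ℂ] m)) = rel.mkQ ((h * k) ⊗ₜ[ℂ] m) := by
    intro h k m
    simp only [act, LinearMap.coe_mk, AddHom.coe_mk, Submodule.mkQ_apply,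
      Submodule.mapQ_apply, LinearMap.rTensor_tmul, LinearMap.mulLeft_apply]
  -- the generators of `rel` are killed on the right
  have hright : ∀ v : H ⊗[ℂ] M, rel ≤ LinearMap.ker (ceB E hE_mem ρ v) := by
    intro v
    refine le_trans hrel.le (Submodule.span_le.2 ?_)
    rintro x ⟨k, p, m, rfl⟩
    simp only [SetLike.mem_coe, LinearMap.mem_ker, map_sub]
    rw [sub_eq_zero]
    induction v using TensorProduct.induction_on with
    | zero => simp
    | tmul h' m' =>
        rw [ceB_tmul, ceB_tmul]
        have h1 : star h' * (k * (p : H)) = (star h' * k) * (p : H) := by rw [mul_assoc]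
        have h2 : ceEρ E hE_mem ρ ((star h' * k) * (p : H))
            = (ceEρ E hE_mem ρ (star h' * k)) * (ρ p) := by
          show ρ ⟨E ((star h' * k) * (p : H)), _⟩ = _
          have hb := (hE_bimod (p : H) p.2 (star h' * k)).2
          rw [show (⟨E ((star h' * k) * (p : H)), hE_mem _⟩ : P)
              = ⟨E (star h' * k), hE_mem _⟩ * p from Subtype.ext (by simp [hb]),
            map_mul]
          rfl
        rw [h1, h2]
        rfl
    | add v₁ v₂ ih₁ ih₂ =>
        rw [map_add, LinearMap.add_apply, LinearMap.add_apply, ih₁, ih₂]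
  set B' : (H ⊗[ℂ] M) →ₛₗ[starRingEnd ℂ] (((H ⊗[ℂ] M) ⧸ rel) →ₗ[ℂ] ℂ) :=
    { toFun := fun v => rel.liftQ (ceB E hE_mem ρ v) (hright v)
      map_add' := by
        intro v₁ v₂
        refine Submodule.linearMap_qext _ (LinearMap.ext fun w => ?_)
        simp only [LinearMap.comp_apply, Submodule.mkQ_apply, Submodule.liftQ_apply,
          map_add, LinearMap.add_apply]
      map_smul' := by
        intro c v
        refine Submodule.linearMap_qext _ (LinearMap.ext fun w => ?_)
        simp only [LinearMap.comp_apply, Submodule.mkQ_apply, Submodule.liftQ_apply,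
          map_smulₛₗ, LinearMap.smul_apply] }
  have hB'_mk : ∀ (v w : H ⊗[ℂ] M), B' v (rel.mkQ w) = ceB E hE_mem ρ v w := by
    intro v w
    simp only [B', LinearMap.coe_mk, AddHom.coe_mk, Submodule.mkQ_apply,
      Submodule.liftQ_apply]
  -- the generators of `rel` are killed on the left
  have hleft : rel ≤ LinearMap.ker B' := by
    refine le_trans hrel.le (Submodule.span_le.2 ?_)
    rintro x ⟨k, p, m, rfl⟩
    simp only [SetLike.mem_coe, LinearMap.mem_ker, map_sub]
    rw [sub_eq_zero]
    refine Submodule.linearMap_qext _ (TensorProduct.ext' fun k' n => ?_)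
    simp only [LinearMap.comp_apply]
    rw [hB'_mk, hB'_mk, ceB_tmul, ceB_tmul]
    have h1 : star (k * (p : H)) * k' = star (p : H) * (star k * k') := by
      rw [star_mul, mul_assoc]
    have h2 : ceEρ E hE_mem ρ (star (p : H) * (star k * k'))
        = (ρ (star p)) * (ceEρ E hE_mem ρ (star k * k')) := by
      show ρ ⟨E (star (p : H) * (star k * k')), _⟩ = _
      have hsp : (star (p : H)) ∈ P := star_mem p.2
      have hb := (hE_bimod (star (p : H)) hsp (star k * k')).1
      rw [show (⟨E (star (p : H) * (star k * k')), hE_mem _⟩ : P)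
          = (star p) * ⟨E (star k * k'), hE_mem _⟩ from Subtype.ext (by simp [hb]),
        map_mul]
      rfl
    rw [h1, h2, map_star, LinearMap.star_eq_adjoint]
    rw [Module.End.mul_apply, LinearMap.adjoint_inner_right]
  set B : ((H ⊗[ℂ] M) ⧸ rel) →ₛₗ[starRingEnd ℂ] (((H ⊗[ℂ] M) ⧸ rel) →ₗ[ℂ] ℂ) :=
    rel.liftQ B' hleft
  have hB_mk : ∀ v : H ⊗[ℂ] M, B (rel.mkQ v) = B' v := by
    intro v
    simp only [B, Submodule.mkQ_apply, Submodule.liftQ_apply]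
  have hB_eq : ∀ (h k : H) (m n : M),
      B (rel.mkQ (h ⊗ₜ[ℂ] m)) (rel.mkQ (k ⊗ₜ[ℂ] n))
        = inner (𝕜 := ℂ) m (ρ ⟨E (star h * k), hE_mem _⟩ n) := by
    intro h k m n
    rw [hB_mk, hB'_mk, ceB_tmul]
    rfl
  refine ⟨act, B, hact_eq, hB_eq, ?_⟩
  intro h v w
  obtain ⟨x, rfl⟩ := rel.mkQ_surjective v
  obtain ⟨y, rfl⟩ := rel.mkQ_surjective w
  induction x using TensorProduct.induction_on with
  | zero => simp
  | tmul h' m =>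
      induction y using TensorProduct.induction_on with
      | zero => simp
      | tmul k n =>
          rw [hact_eq, hact_eq, hB_eq, hB_eq]
          have hh : star (star h * h') * k = star h' * (h * k) := by
            rw [star_mul, star_star, mul_assoc]
          rw [hh]
      | add y₁ y₂ ih₁ ih₂ =>
          simp only [map_add, LinearMap.add_apply, ih₁, ih₂]
  | add x₁ x₂ ih₁ ih₂ =>
      simp only [map_add, LinearMap.add_apply, ih₁, ih₂]
end
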